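/- Let R = ℚ(v)[b, t] be the commutative polynomial ring in two variables over ℚ(v). Define the even ı-divided powers by B_{0̄}^{(2k)} = (1/[2k]_v!) · ∏_{s=1}^{k} (b² - v·t·[2s-2]_v²) and B_{0̄}^{(2k+1)} = (1/[2k+1]_v!) · b · ∏_{s=1}^{k} (b² - v·t·[2s]_v²). Then for all m ≥ 1: b · B_{0̄}^{(2m-1)} = [2m]_v B_{0̄}^{(2m)}, and b · B_{0̄}^{(2m)} = [2m+1]_v B_{0̄}^{(2m+1)} + v [2m]_v t · B_{0̄}^{(2m-1)}. -/
import Mathlib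


open scoped BigOperators
open Finset

noncomputable section

abbrev K : Type := RatFunc ℚ

def v : K := RatFunc.X

/-- Balanced quantum integer `[n]_v = (v^n - v^{-n})/(v - v⁻¹)`. -/
def qint (n : ℤ) : K := (v ^ n - v ^ (-n)) / (v - v⁻¹)

/-- Balanced quantum factorial `[n]_v!`. -/
def qfact : ℕ → K
  | 0 => 1
  | n + 1 => qfact n * qint ((n : ℤ) + 1)

/-- Balanced Gaussian binomial coefficient `[p choose t]_v`. -/
def qbinom (p t : ℕ) : K := qfact p / (qfact t * qfact (p - t))

/-- Quantum double factorial `[2k]_v!! = [2k]_v [2k-2]_v ⋯ [2]_v`. -/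
def ddfact : ℕ → K
  | 0 => 1
  | k + 1 => ddfact k * qint (2 * ((k : ℤ) + 1))


/-- The polynomial ring Q(v)[b,t] in two commuting variables. -/
abbrev P : Type := MvPolynomial (Fin 2) K

def b : P := MvPolynomial.X 0
def t : P := MvPolynomial.X 1

/-- The even i-divided power B_{0}^{(m)}; for m = 2k it is
(1/[2k]!) prod_{s=1}^{k} (b^2 - v t [2s-2]^2), and for m = 2k+1 it is
(1/[2k+1]!) b prod_{s=1}^{k} (b^2 - v t [2s]^2). -/
def Bev (m : ℕ) : P :=
  if m % 2 = 0 then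
    MvPolynomial.C (qfact m)⁻¹ *
      ∏ s ∈ range (m / 2), (b ^ 2 - MvPolynomial.C (v * qint (2 * (s : ℤ)) ^ 2) * t)
  else
    MvPolynomial.C (qfact m)⁻¹ * b *
      ∏ s ∈ range (m / 2), (b ^ 2 - MvPolynomial.C (v * qint (2 * ((s : ℤ) + 1)) ^ 2) * t)

lemma v_ne_zero : v ≠ 0 := RatFunc.X_ne_zero

lemma vpow_ne_one (n : ℕ) (hn : 0 < n) : v ^ n ≠ 1 := by
  intro h
  have : (Polynomial.X : Polynomial ℚ) ^ n = 1 := by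
    apply RatFunc.algebraMap_injective ℚ
    simpa [map_pow, RatFunc.algebraMap_X, v] using h
  have := congrArg Polynomial.natDegree this
  simp [Polynomial.natDegree_X_pow] at this
  omega

lemma denom_ne : v - v⁻¹ ≠ 0 := by
  intro h
  have hv := v_ne_zero
  have h2 : v ^ 2 = 1 := by
    have hv' : v = v⁻¹ := sub_eq_zero.mp h
    rw [sq]
    nth_rewrite 2 [hv']
    field_simp
  exact vpow_ne_one 2 (by norm_num) h2

lemma qint_ne_zero (n : ℕ) (hn : 0 < n) : qint n ≠ 0 := by
  have hv := v_ne_zero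
  apply div_ne_zero _ denom_ne
  intro h
  rw [sub_eq_zero, zpow_neg] at h
  have h2 : v ^ (2 * n) = 1 := by
    have hmul : v ^ (n:ℤ) * v ^ (n:ℤ) = 1 := by
      nth_rewrite 1 [h]; exact inv_mul_cancel₀ (zpow_ne_zero _ hv)
    rw [show (2*n : ℕ) = n + n by ring, pow_add, ← zpow_natCast, ← zpow_add₀ hv]
    rw [← zpow_add₀ hv] at hmul
    convert hmul using 2
  exact vpow_ne_one (2*n) (by omega) h2

lemma qfact_ne_zero (n : ℕ) : qfact n ≠ 0 := by
  induction n with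
  | zero => simp [qfact]
  | succ k ih =>
    rw [qfact]
    exact mul_ne_zero ih (by
      have := qint_ne_zero (k+1) (by omega)
      simpa using this)

lemma qint_zero : qint 0 = 0 := by simp [qint]

def F (s : ℕ) : P := b ^ 2 - MvPolynomial.C (v * qint (2 * ((s : ℤ) + 1)) ^ 2) * t

lemma Bev_odd (k : ℕ) :
    Bev (2*k+1) = MvPolynomial.C (qfact (2*k+1))⁻¹ * b * ∏ s ∈ range k, F s := by
  rw [Bev, if_neg (by omega), show (2*k+1)/2 = k from by omega]
  rfl

lemma prod_shift (k : ℕ) :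
    ∏ s ∈ range (k+1), (b ^ 2 - MvPolynomial.C (v * qint (2 * (s : ℤ)) ^ 2) * t)
      = b^2 * ∏ s ∈ range k, F s := by
  rw [prod_range_succ']
  rw [show (b ^ 2 - MvPolynomial.C (v * qint (2 * ((0:ℕ) : ℤ)) ^ 2) * t) = b^2 by
    simp [qint_zero]]
  rw [mul_comm]
  congr 1

lemma Bev_even (k : ℕ) :
    Bev (2*k+2) = MvPolynomial.C (qfact (2*k+2))⁻¹ * (b^2 * ∏ s ∈ range k, F s) := by
  rw [Bev, if_pos (by omega), show (2*k+2)/2 = k+1 from by omega, prod_shift]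

lemma qfact_step (n : ℕ) : qfact (n+1) = qfact n * qint ((n+1 : ℕ) : ℤ) := by
  rw [qfact]
  push_cast
  ring_nf

lemma qscal (n : ℕ) : qint ((n+1 : ℕ) : ℤ) * (qfact (n+1))⁻¹ = (qfact n)⁻¹ := by
  rw [qfact_step, mul_inv, mul_comm (qfact n)⁻¹, ← mul_assoc,
    mul_inv_cancel₀ (qint_ne_zero (n+1) (by omega)), one_mul]

theorem Bev_recursions (m : ℕ) (hm : 1 ≤ m) :
    b * Bev (2 * m - 1) = MvPolynomial.C (qint (2 * m)) * Bev (2 * m) ∧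
    b * Bev (2 * m) = MvPolynomial.C (qint (2 * m + 1)) * Bev (2 * m + 1)
      + MvPolynomial.C (v * qint (2 * m)) * t * Bev (2 * m - 1) := by
  obtain ⟨k, rfl⟩ : ∃ k, m = k + 1 := ⟨m - 1, by omega⟩
  rw [show 2 * (k+1) - 1 = 2*k+1 from by omega, show 2 * (k+1) = 2*k+2 from by omega,
    show 2*k+2+1 = 2*(k+1)+1 from by ring,
    show ((2 : ℤ) * ((k+1 : ℕ) : ℤ)) = (((2*k+1)+1 : ℕ) : ℤ) from by push_cast; ring]
  rw [Bev_odd k, Bev_even k, Bev_odd (k+1), prod_range_succ]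
  set Q : P := ∏ s ∈ range k, F s with hQ
  constructor
  · rw [show MvPolynomial.C (qint (((2*k+1)+1 : ℕ) : ℤ)) *
        (MvPolynomial.C (qfact (2*k+2))⁻¹ * (b^2 * Q))
        = MvPolynomial.C (qint (((2*k+1)+1 : ℕ) : ℤ) * (qfact ((2*k+1)+1))⁻¹) * (b^2 * Q)
        from by rw [map_mul]; ring_nf, qscal (2*k+1)]
    ring
  · rw [show ((((2*k+1)+1 : ℕ) : ℤ) + 1) = (((2*k+2)+1 : ℕ) : ℤ) from by push_cast; ring]
    rw [show MvPolynomial.C (qint (((2*k+2)+1 : ℕ) : ℤ)) *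
        (MvPolynomial.C (qfact (2*(k+1)+1))⁻¹ * b * (Q * F k))
        = MvPolynomial.C (qint (((2*k+2)+1 : ℕ) : ℤ) * (qfact ((2*k+2)+1))⁻¹) * (b * (Q * F k))
        from by rw [map_mul]; ring_nf, qscal (2*k+2)]
    rw [← qscal (2*k+1)]
    rw [F, show (2 * ((k:ℤ) + 1)) = (((2*k+1)+1 : ℕ) : ℤ) from by push_cast; ring]
    simp only [map_mul, map_pow]
    ring
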